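/- For all positive integers s and h with s ≥ 4 and s ∉ {5,7}, the strict inequality s·l(h) − l(s·h) > ⌊(s+1)/2⌋ holds. -/
import Mathlib


noncomputable def ell (g : ℕ) : ℕ :=
  sInf {k | ∃ a n : Fin k → ℕ, (∀ i, a i = 1 ∨ a i = 3) ∧ g = ∑ i, a i * 2 ^ n i}

noncomputable def obj (g : ℕ) : ℕ := g - ell g

lemma ell_le {g k : ℕ} (a n : Fin k → ℕ) (ha : ∀ i, a i = 1 ∨ a i = 3)
    (hg : g = ∑ i, a i * 2 ^ n i) : ell g ≤ k :=
  Nat.sInf_le ⟨a, n, ha, hg⟩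

lemma ell_mem (g : ℕ) : ∃ a n : Fin (ell g) → ℕ,
    (∀ i, a i = 1 ∨ a i = 3) ∧ g = ∑ i, a i * 2 ^ n i := by
  have hne : {k | ∃ a n : Fin k → ℕ, (∀ i, a i = 1 ∨ a i = 3) ∧
      g = ∑ i, a i * 2 ^ n i}.Nonempty :=
    ⟨g, fun _ => 1, fun _ => 0, fun i => Or.inl rfl, by simp⟩
  exact Nat.sInf_mem hne

lemma ell_pos {g : ℕ} (hg : 0 < g) : 1 ≤ ell g := by
  obtain ⟨a, n, ha, hsum⟩ := ell_mem g
  by_contra hlt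
  have h0 : ell g = 0 := by omega
  have hE : IsEmpty (Fin (ell g)) := by rw [h0]; infer_instance
  rw [Finset.univ_eq_empty, Finset.sum_empty] at hsum
  omega

lemma ell_mul_le {s : ℕ} (h w : ℕ) (m : Fin w → ℕ) (hs : s = ∑ j, 2 ^ m j) :
    ell (s * h) ≤ w * ell h := by
  obtain ⟨a, n, ha, hh⟩ := ell_mem h
  let e := (finProdFinEquiv : Fin w × Fin (ell h) ≃ Fin (w * ell h))
  refine ell_le (fun p => a (e.symm p).2) (fun p => n (e.symm p).2 + m (e.symm p).1)
    (fun p => ha _) ?_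
  have := Equiv.sum_comp e.symm (fun q : Fin w × Fin (ell h) => a q.2 * 2 ^ (n q.2 + m q.1))
  rw [this]
  rw [Fintype.sum_prod_type]
  calc s * h = ∑ j : Fin w, 2 ^ m j * h := by rw [hs, Finset.sum_mul]
    _ = ∑ j : Fin w, ∑ i : Fin (ell h), a i * 2 ^ (n i + m j) := by
        refine Finset.sum_congr rfl fun j _ => ?_
        conv_lhs => rw [hh]
        rw [Finset.mul_sum]
        refine Finset.sum_congr rfl fun i _ => ?_
        rw [pow_add]
        ring

lemma binrep : ∀ s, 4 ≤ s → s ≠ 5 → s ≠ 7 →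
    ∃ w, ∃ m : Fin w → ℕ, s = ∑ j, 2 ^ m j ∧ 2 * w + 2 ≤ s := by
  intro s
  induction s using Nat.strong_induction_on with
  | _ s ih =>
    intro h4 h5 h7
    by_cases hbig : s < 16
    · interval_cases s
      · exact ⟨1, ![2], by decide, by decide⟩
      · exact absurd rfl h5
      · exact ⟨2, ![1, 2], by decide, by decide⟩
      · exact absurd rfl h7
      · exact ⟨1, ![3], by decide, by decide⟩
      · exact ⟨2, ![0, 3], by decide, by decide⟩
      · exact ⟨2, ![1, 3], by decide, by decide⟩
      · exact ⟨3, ![0, 1, 3], by decide, by decide⟩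
      · exact ⟨2, ![2, 3], by decide, by decide⟩
      · exact ⟨3, ![0, 2, 3], by decide, by decide⟩
      · exact ⟨3, ![1, 2, 3], by decide, by decide⟩
      · exact ⟨4, ![0, 1, 2, 3], by decide, by decide⟩
    · push_neg at hbig
      obtain ⟨w, m, hm, hw⟩ := ih (s / 2) (by omega) (by omega) (by omega) (by omega)
      rcases Nat.even_or_odd s with he | ho
      · obtain ⟨t, ht⟩ := he
        refine ⟨w, fun j => m j + 1, ?_, by omega⟩
        calc s = (s / 2) * 2 := by omega
          _ = (∑ j, 2 ^ m j) * 2 := by rw [hm]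
          _ = ∑ j, 2 ^ (m j + 1) := by rw [Finset.sum_mul]; simp [pow_succ]
      · obtain ⟨t, ht⟩ := ho
        refine ⟨w + 1, Fin.cons 0 (fun j => m j + 1), ?_, by omega⟩
        rw [Fin.sum_univ_succ]
        simp only [Fin.cons_zero, Fin.cons_succ]
        calc s = 2 ^ 0 + (s / 2) * 2 := by omega
          _ = 2 ^ 0 + (∑ j, 2 ^ m j) * 2 := by rw [hm]
          _ = 2 ^ 0 + ∑ j, 2 ^ (m j + 1) := by rw [Finset.sum_mul]; simp [pow_succ]

theorem stmt17 (s h : ℕ) (hs : 4 ≤ s) (hs5 : s ≠ 5) (hs7 : s ≠ 7) (hh : 0 < h) :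
    s * ell h - ell (s * h) > (s + 1) / 2 := by
  obtain ⟨w, m, hm, hw⟩ := binrep s hs hs5 hs7
  have h1 : ell (s * h) ≤ w * ell h := ell_mul_le h w m hm
  have h2 : 1 ≤ ell h := ell_pos hh
  have h3 : (s - w) * ell h = s * ell h - w * ell h := Nat.sub_mul s w (ell h)
  have h4 : s - w ≤ (s - w) * ell h := Nat.le_mul_of_pos_right _ h2
  omega
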